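/- arXiv:2009.04981 — 2 statements merged into one kernel-verified Lean document; each statement's English description precedes it below -/
import Mathlib

section
/- Let W be an N×N real matrix with nonnegative entries, positive diagonal entries, row sums equal to 1 (W·1 = 1), and strongly connected digraph (for all i,j there exists m ≥ 1 with (W^m)_{i,j} > 0). Let q be its left Perron–Frobenius eigenvector and Q = diag(q). Then σ̄ := σ_{N−1}(Q^{1/2} W Q^{−1/2}) (the second-largest singular value of Q^{1/2} W Q^{−1/2}) satisfies σ̄ < 1, and for every y ∈ ℝ^N it holds that ‖W(y − 1·qᵀy)‖_Q ≤ σ̄ ‖y − 1·qᵀy‖_Q. -/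
/-! Write `D = Q^{1/2}` and `B = D W D⁻¹`. The substitution `u = D z` turns `‖B u‖²` into
`∑ qᵢ (W z)ᵢ²`, and stationarity of `q` together with the variance identity on each row of `W`
gives `∑ qᵢ zᵢ² - ∑ qᵢ (W z)ᵢ² = ∑ qᵢ ∑ⱼ Wᵢⱼ (zⱼ - (W z)ᵢ)² ≥ 0`. So `BᵀB` has its eigenvalues in
`[0, 1]`, and for an eigenvector of eigenvalue `1` the gap vanishes: `z` takes the value `(W z)ᵢ` on
every out-neighbour of `i`, including `i` itself (positive diagonal), so `z` is constant along the
edges of `W` and hence constant by irreducibility, i.e. `u ∥ √q`. The eigenvalue `1`, attained at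
`√q`, is therefore simple: the second largest eigenvalue `σ̄²` of `BᵀB` is `< 1`, and it bounds the
quadratic form of `BᵀB` on `√q^⊥`, where `D (y - 1 qᵀy)` lives. -/

open Matrix

/-- `P`-weighted norm `‖x‖_P = √(xᵀ P x)`. -/
noncomputable def wnorm {ι : Type*} [Fintype ι] (P : Matrix ι ι ℝ) (x : ι → ℝ) : ℝ :=
  Real.sqrt (x ⬝ᵥ P.mulVec x)

/-- The singular values of a real square matrix, sorted in nondecreasing order
`σ₁(A) ≤ … ≤ σ_N(A)`; `sortedSingVals A i` is `σ_{i+1}(A)` (0-based index `i`). -/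
noncomputable def sortedSingVals {N : ℕ} (A : Matrix (Fin N) (Fin N) ℝ) : Fin N → ℝ :=
  fun i =>
    Real.sqrt (((Matrix.isHermitian_conjTranspose_mul_self A).eigenvalues ∘
      Tuple.sort (Matrix.isHermitian_conjTranspose_mul_self A).eigenvalues) i)

lemma Matrix.IsIrreducible.eq_of_forall_pos {ι : Type*} {W : Matrix ι ι ℝ} (hW : W.IsIrreducible)
    {z : ι → ℝ} (h : ∀ i j, 0 < W i j → z j = z i) (i j : ι) : z j = z i := by
  let := toQuiver W
  obtain ⟨p, -⟩ := hW.connected i j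
  induction p with
  | nil => rfl
  | cons _ e ih => exact (h _ _ e.down).trans ih

section Stochastic

variable {ι : Type*} [Fintype ι] {W : Matrix ι ι ℝ}

lemma mulVec_sq_sub_sq_mulVec (hW1 : ∀ i, ∑ j, W i j = 1) (z : ι → ℝ) (i : ι) :
    (W *ᵥ (z ^ 2)) i - (W *ᵥ z) i ^ 2 = ∑ j, W i j * (z j - (W *ᵥ z) i) ^ 2 := by
  set c := (W *ᵥ z) i
  have hc : ∑ j, W i j * z j = c := rfl
  simp only [mulVec, dotProduct, Pi.pow_apply]
  have : ∀ j, W i j * (z j - c) ^ 2 = W i j * z j ^ 2 - 2 * c * (W i j * z j) + c ^ 2 * W i j :=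
    fun j => by ring
  simp only [this, Finset.sum_add_distrib, Finset.sum_sub_distrib, ← Finset.mul_sum, hc, hW1]
  ring

lemma sum_mul_sq_sub_sum_mul_sq_mulVec (hW1 : ∀ i, ∑ j, W i j = 1) {q : ι → ℝ}
    (hqW : q ᵥ* W = q) (z : ι → ℝ) :
    ∑ i, q i * z i ^ 2 - ∑ i, q i * (W *ᵥ z) i ^ 2 =
      ∑ i, q i * ∑ j, W i j * (z j - (W *ᵥ z) i) ^ 2 := by
  have hsq : ∑ i, q i * z i ^ 2 = q ⬝ᵥ (W *ᵥ (z ^ 2)) := by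
    rw [dotProduct_mulVec, hqW]; rfl
  simp only [hsq, dotProduct, ← mulVec_sq_sub_sq_mulVec hW1, mul_sub, Finset.sum_sub_distrib]

lemma sum_mul_sq_mulVec_le (hW0 : ∀ i j, 0 ≤ W i j) (hW1 : ∀ i, ∑ j, W i j = 1) {q : ι → ℝ}
    (hq : ∀ i, 0 ≤ q i) (hqW : q ᵥ* W = q) (z : ι → ℝ) :
    ∑ i, q i * (W *ᵥ z) i ^ 2 ≤ ∑ i, q i * z i ^ 2 := by
  rw [← sub_nonneg, sum_mul_sq_sub_sum_mul_sq_mulVec hW1 hqW]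
  exact Finset.sum_nonneg fun i _ => mul_nonneg (hq i) <|
    Finset.sum_nonneg fun j _ => mul_nonneg (hW0 i j) (sq_nonneg _)

lemma eq_of_sum_mul_sq_mulVec_eq (hW : W.IsIrreducible) (hWdiag : ∀ i, 0 < W i i)
    (hW1 : ∀ i, ∑ j, W i j = 1) {q : ι → ℝ} (hq : ∀ i, 0 < q i) (hqW : q ᵥ* W = q)
    {z : ι → ℝ} (hz : ∑ i, q i * (W *ᵥ z) i ^ 2 = ∑ i, q i * z i ^ 2) (i j : ι) :
    z j = z i := by
  have hgap := sum_mul_sq_sub_sum_mul_sq_mulVec hW1 hqW z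
  rw [hz, sub_self, eq_comm, Finset.sum_eq_zero_iff_of_nonneg fun i _ => mul_nonneg (hq i).le <|
    Finset.sum_nonneg fun j _ => mul_nonneg (hW.nonneg i j) (sq_nonneg _)] at hgap
  have hedge : ∀ i j, 0 < W i j → z j = (W *ᵥ z) i := by
    intro i j hij
    have hrow := (mul_eq_zero.mp (hgap i (Finset.mem_univ i))).resolve_left (hq i).ne'
    rw [Finset.sum_eq_zero_iff_of_nonneg fun j _ => mul_nonneg (hW.nonneg i j) (sq_nonneg _)]
      at hrow
    have := (mul_eq_zero.mp (hrow j (Finset.mem_univ j))).resolve_left hij.ne'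
    exact sub_eq_zero.mp (pow_eq_zero_iff two_ne_zero |>.mp this)
  exact hW.eq_of_forall_pos (fun i j hij => (hedge i j hij).trans (hedge i i (hWdiag i)).symm) i j

end Stochastic

lemma OrthonormalBasis.dotProduct_eq_sum {n ι : Type*} [Fintype n] [Fintype ι]
    (b : OrthonormalBasis ι ℝ (EuclideanSpace ℝ n)) (u w : n → ℝ) :
    u ⬝ᵥ w = ∑ j, (⇑(b j) ⬝ᵥ u) * (⇑(b j) ⬝ᵥ w) := by
  have := b.sum_inner_mul_inner (WithLp.toLp 2 u) (WithLp.toLp 2 w)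
  simp only [EuclideanSpace.inner_eq_star_dotProduct, star_trivial] at this
  rw [dotProduct_comm, ← this]
  exact Finset.sum_congr rfl fun j _ => by rw [dotProduct_comm w]

lemma OrthonormalBasis.dotProduct_apply {n ι : Type*} [Fintype n] [Fintype ι] [DecidableEq ι]
    (b : OrthonormalBasis ι ℝ (EuclideanSpace ℝ n)) (j k : ι) :
    ⇑(b j) ⬝ᵥ ⇑(b k) = if j = k then 1 else 0 := by
  rw [← orthonormal_iff_ite.mp b.orthonormal j k, EuclideanSpace.inner_eq_star_dotProduct,
    star_trivial, dotProduct_comm]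

lemma Tuple.apply_le_sort_penultimate {α : Type*} [LinearOrder α] {N : ℕ} (hN : 2 ≤ N)
    (f : Fin N → α) {j : Fin N} (hj : j ≠ Tuple.sort f ⟨N - 1, by omega⟩) :
    f j ≤ f (Tuple.sort f ⟨N - 2, by omega⟩) := by
  obtain ⟨k, rfl⟩ := (Tuple.sort f).surjective j
  have hk : (k : ℕ) ≠ N - 1 := fun h => hj (congrArg _ (Fin.ext h))
  exact Tuple.monotone_sort f (show (k : ℕ) ≤ N - 2 by omega)

section Spectral

variable {n : Type*} [Fintype n] [DecidableEq n] {A : Matrix n n ℝ} (hA : A.IsHermitian)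
include hA

lemma Matrix.IsHermitian.eigenvectorBasis_dotProduct_mulVec (j : n) (u : n → ℝ) :
    ⇑(hA.eigenvectorBasis j) ⬝ᵥ (A *ᵥ u) =
      hA.eigenvalues j * (⇑(hA.eigenvectorBasis j) ⬝ᵥ u) := by
  rw [dotProduct_mulVec, ← mulVec_transpose, ← conjTranspose_eq_transpose_of_trivial, hA.eq,
    hA.mulVec_eigenvectorBasis, smul_dotProduct, smul_eq_mul]

lemma Matrix.IsHermitian.dotProduct_mulVec_le_of_forall_lt (m : ℝ) {u : n → ℝ}
    (hu : ∀ j, m < hA.eigenvalues j → ⇑(hA.eigenvectorBasis j) ⬝ᵥ u = 0) :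
    u ⬝ᵥ (A *ᵥ u) ≤ m * (u ⬝ᵥ u) := by
  rw [hA.eigenvectorBasis.dotProduct_eq_sum, hA.eigenvectorBasis.dotProduct_eq_sum u u,
    Finset.mul_sum]
  refine Finset.sum_le_sum fun j _ => ?_
  rw [hA.eigenvectorBasis_dotProduct_mulVec]
  rcases le_or_gt (hA.eigenvalues j) m with hj | hj
  · nlinarith [mul_self_nonneg (⇑(hA.eigenvectorBasis j) ⬝ᵥ u)]
  · simp [hu j hj]

lemma Matrix.IsHermitian.exists_eigenvalues_eq {a : ℝ} {v : n → ℝ} (hv : A *ᵥ v = a • v)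
    (hv0 : v ≠ 0) : ∃ j, hA.eigenvalues j = a := by
  by_contra! hne
  have hperp : ∀ j, ⇑(hA.eigenvectorBasis j) ⬝ᵥ v = 0 := fun j => by
    have := hA.eigenvectorBasis_dotProduct_mulVec j v
    rw [hv, dotProduct_smul, smul_eq_mul] at this
    exact (mul_eq_mul_right_iff.mp this).resolve_left (hne j).symm
  apply hv0
  rw [← dotProduct_self_eq_zero, hA.eigenvectorBasis.dotProduct_eq_sum]
  simp [hperp]

lemma Matrix.IsHermitian.eq_of_eigenvalues_eq {a : ℝ} {v : n → ℝ}
    (hfix : ∀ u, A *ᵥ u = a • u → ∃ c : ℝ, u = c • v) {j k : n}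
    (hj : hA.eigenvalues j = a) (hk : hA.eigenvalues k = a) : j = k := by
  set e := fun i => ⇑(hA.eigenvectorBasis i)
  have he : ∀ i, hA.eigenvalues i = a → ∃ c : ℝ, e i = c • v := fun i hi =>
    hfix _ (by rw [hA.mulVec_eigenvectorBasis, hi])
  obtain ⟨c, hc⟩ := he j hj
  obtain ⟨c', hc'⟩ := he k hk
  by_contra hjk
  have hcomb : c' • e j = c • e k := by rw [hc, hc', smul_smul, smul_smul, mul_comm]
  have hc'0 : c' = 0 := by
    simpa [e, dotProduct_smul, hA.eigenvectorBasis.dotProduct_apply, hjk] using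
      congrArg (e j ⬝ᵥ ·) hcomb
  have := hA.eigenvectorBasis.dotProduct_apply k k
  simp [e, hc', hc'0] at this

end Spectral

section SimpleTopEigenvalue

variable {N : ℕ} (hN : 2 ≤ N) {A : Matrix (Fin N) (Fin N) ℝ} (hA : A.IsHermitian) {a : ℝ}
  {v : Fin N → ℝ} (hle : ∀ j, hA.eigenvalues j ≤ a)
  (hfix : ∀ u, A *ᵥ u = a • u → ∃ c : ℝ, u = c • v)
include hle hfix

lemma Matrix.IsHermitian.eigenvalues_sort_penultimate_lt :
    hA.eigenvalues (Tuple.sort hA.eigenvalues ⟨N - 2, by omega⟩) < a := by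
  by_contra! hge
  have hlt : (⟨N - 2, by omega⟩ : Fin N) < ⟨N - 1, by omega⟩ := Fin.mk_lt_mk.mpr (by omega)
  have hlast : a ≤ hA.eigenvalues (Tuple.sort hA.eigenvalues ⟨N - 1, by omega⟩) :=
    hge.trans (Tuple.monotone_sort hA.eigenvalues hlt.le)
  exact hlt.ne <| (Tuple.sort _).injective <|
    hA.eq_of_eigenvalues_eq hfix ((hle _).antisymm hge) ((hle _).antisymm hlast)

lemma Matrix.IsHermitian.dotProduct_mulVec_le_eigenvalues_sort_penultimate
    (hv : A *ᵥ v = a • v) (hv0 : v ≠ 0) {u : Fin N → ℝ} (hu : v ⬝ᵥ u = 0) :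
    u ⬝ᵥ (A *ᵥ u) ≤ hA.eigenvalues (Tuple.sort hA.eigenvalues ⟨N - 2, by omega⟩) * (u ⬝ᵥ u) := by
  have hgap := hA.eigenvalues_sort_penultimate_lt hN hle hfix
  refine hA.dotProduct_mulVec_le_of_forall_lt _ fun j hj => ?_
  have hj_last : j = Tuple.sort hA.eigenvalues ⟨N - 1, by omega⟩ :=
    by_contra fun h => hj.not_ge (Tuple.apply_le_sort_penultimate hN _ h)
  obtain ⟨k, hk⟩ := hA.exists_eigenvalues_eq hv hv0
  have hk_last : k = Tuple.sort hA.eigenvalues ⟨N - 1, by omega⟩ :=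
    by_contra fun h => (Tuple.apply_le_sort_penultimate hN _ h).not_gt (hk ▸ hgap)
  have hμj : hA.eigenvalues j = a := by rw [hj_last, ← hk_last, hk]
  obtain ⟨c, hc⟩ := hfix (hA.eigenvectorBasis j) (by rw [hA.mulVec_eigenvectorBasis, hμj])
  rw [hc, smul_dotProduct, hu, smul_zero]

end SimpleTopEigenvalue

lemma Matrix.dotProduct_conjTranspose_mul_self_mulVec {n : Type*} [Fintype n]
    (B : Matrix n n ℝ) (u : n → ℝ) : u ⬝ᵥ ((Bᴴ * B) *ᵥ u) = (B *ᵥ u) ⬝ᵥ (B *ᵥ u) := by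
  rw [← mulVec_mulVec, dotProduct_mulVec, conjTranspose_eq_transpose_of_trivial, vecMul_transpose,
    dotProduct_comm]

section SingularValues

variable {N : ℕ} (hN : 2 ≤ N) {B : Matrix (Fin N) (Fin N) ℝ} {v : Fin N → ℝ}
  (hcontr : ∀ u, (B *ᵥ u) ⬝ᵥ (B *ᵥ u) ≤ u ⬝ᵥ u)
  (hrigid : ∀ u, (B *ᵥ u) ⬝ᵥ (B *ᵥ u) = u ⬝ᵥ u → ∃ c : ℝ, u = c • v)

include hcontr in
lemma Matrix.eigenvalues_conjTranspose_mul_self_le_one (j : Fin N) :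
    (isHermitian_conjTranspose_mul_self B).eigenvalues j ≤ 1 := by
  set hA := isHermitian_conjTranspose_mul_self B
  have hunit := hA.eigenvectorBasis.dotProduct_apply j j
  rw [if_pos rfl] at hunit
  rw [hA.eigenvalues_eq j, star_trivial, RCLike.re_to_real,
    dotProduct_conjTranspose_mul_self_mulVec, ← hunit]
  exact hcontr _

include hrigid in
lemma Matrix.exists_eq_smul_of_conjTranspose_mul_self_mulVec_eq (u : Fin N → ℝ)
    (hu : (Bᴴ * B) *ᵥ u = (1 : ℝ) • u) : ∃ c : ℝ, u = c • v := by
  refine hrigid u ?_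
  rw [← dotProduct_conjTranspose_mul_self_mulVec, hu, one_smul]

include hcontr hrigid

lemma sortedSingVals_penultimate_lt_one : sortedSingVals B ⟨N - 2, by omega⟩ < 1 := by
  rw [sortedSingVals, Function.comp_apply, Real.sqrt_lt' one_pos, one_pow]
  exact (isHermitian_conjTranspose_mul_self B).eigenvalues_sort_penultimate_lt hN
    (eigenvalues_conjTranspose_mul_self_le_one hcontr)
    (exists_eq_smul_of_conjTranspose_mul_self_mulVec_eq hrigid)

lemma sqrt_dotProduct_mulVec_le_sortedSingVals (hBv : B *ᵥ v = v) (hvB : v ᵥ* B = v)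
    (hv0 : v ≠ 0) {u : Fin N → ℝ} (hu : v ⬝ᵥ u = 0) :
    √((B *ᵥ u) ⬝ᵥ (B *ᵥ u)) ≤ sortedSingVals B ⟨N - 2, by omega⟩ * √(u ⬝ᵥ u) := by
  have hAv : (Bᴴ * B) *ᵥ v = (1 : ℝ) • v := by
    rw [← mulVec_mulVec, hBv, conjTranspose_eq_transpose_of_trivial, mulVec_transpose, hvB,
      one_smul]
  have hquad :=
    (isHermitian_conjTranspose_mul_self B).dotProduct_mulVec_le_eigenvalues_sort_penultimate hN
      (eigenvalues_conjTranspose_mul_self_le_one hcontr)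
      (exists_eq_smul_of_conjTranspose_mul_self_mulVec_eq hrigid) hAv hv0 hu
  rw [dotProduct_conjTranspose_mul_self_mulVec] at hquad
  rw [sortedSingVals, Function.comp_apply,
    ← Real.sqrt_mul (eigenvalues_conjTranspose_mul_self_nonneg _ _)]
  exact Real.sqrt_le_sqrt hquad

end SingularValues

noncomputable def conjDiagonalSqrt {ι : Type*} [Fintype ι] [DecidableEq ι] (q : ι → ℝ)
    (W : Matrix ι ι ℝ) : Matrix ι ι ℝ :=
  diagonal (fun i => √(q i)) * W * diagonal (fun i => (√(q i))⁻¹)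

section ConjDiagonalSqrt

variable {ι : Type*} [Fintype ι] [DecidableEq ι] {q : ι → ℝ} {W : Matrix ι ι ℝ}

lemma diagonal_sqrt_mulVec_dotProduct_self (hq : ∀ i, 0 ≤ q i) (z : ι → ℝ) :
    (diagonal (fun i => √(q i)) *ᵥ z) ⬝ᵥ (diagonal (fun i => √(q i)) *ᵥ z) =
      ∑ i, q i * z i ^ 2 := by
  simp only [mulVec_diagonal, dotProduct]
  exact Finset.sum_congr rfl fun i _ => by rw [mul_mul_mul_comm, Real.mul_self_sqrt (hq i), sq]

lemma wnorm_diagonal (hq : ∀ i, 0 ≤ q i) (z : ι → ℝ) :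
    wnorm (diagonal q) z =
      √((diagonal (fun i => √(q i)) *ᵥ z) ⬝ᵥ (diagonal (fun i => √(q i)) *ᵥ z)) := by
  rw [wnorm, diagonal_sqrt_mulVec_dotProduct_self hq]
  simp only [mulVec_diagonal, dotProduct]
  exact congrArg _ (Finset.sum_congr rfl fun i _ => by ring)

lemma sqrt_dotProduct_diagonal_sqrt_mulVec (hq : ∀ i, 0 ≤ q i) (z : ι → ℝ) :
    (fun i => √(q i)) ⬝ᵥ (diagonal (fun i => √(q i)) *ᵥ z) = ∑ i, q i * z i := by
  simp only [mulVec_diagonal, dotProduct]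
  exact Finset.sum_congr rfl fun i _ => by rw [← mul_assoc, Real.mul_self_sqrt (hq i)]

variable (hq : ∀ i, 0 < q i)
include hq

lemma diagonal_sqrt_mul_diagonal_inv_sqrt :
    diagonal (fun i => √(q i)) * diagonal (fun i => (√(q i))⁻¹) = 1 := by
  simp [diagonal_mul_diagonal, mul_inv_cancel₀ (Real.sqrt_pos.mpr (hq _)).ne']

lemma diagonal_inv_sqrt_mul_diagonal_sqrt :
    diagonal (fun i => (√(q i))⁻¹) * diagonal (fun i => √(q i)) = 1 := by
  simp [diagonal_mul_diagonal, inv_mul_cancel₀ (Real.sqrt_pos.mpr (hq _)).ne']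

lemma conjDiagonalSqrt_mulVec_diagonal_sqrt (z : ι → ℝ) :
    conjDiagonalSqrt q W *ᵥ (diagonal (fun i => √(q i)) *ᵥ z) =
      diagonal (fun i => √(q i)) *ᵥ (W *ᵥ z) := by
  rw [conjDiagonalSqrt, mulVec_mulVec, Matrix.mul_assoc, diagonal_inv_sqrt_mul_diagonal_sqrt hq,
    Matrix.mul_one, mulVec_mulVec]

lemma exists_eq_diagonal_sqrt_mulVec (u : ι → ℝ) : ∃ z, u = diagonal (fun i => √(q i)) *ᵥ z :=
  ⟨diagonal (fun i => (√(q i))⁻¹) *ᵥ u, by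
    rw [mulVec_mulVec, diagonal_sqrt_mul_diagonal_inv_sqrt hq, one_mulVec]⟩

lemma conjDiagonalSqrt_mulVec_sqrt (hW1 : ∀ i, ∑ j, W i j = 1) :
    conjDiagonalSqrt q W *ᵥ (fun i => √(q i)) = fun i => √(q i) := by
  have hW1' : W *ᵥ 1 = 1 := funext fun i => by simp [mulVec, dotProduct, hW1 i]
  have hsqrt : (fun i => √(q i)) = diagonal (fun i => √(q i)) *ᵥ 1 := funext fun i => by
    simp [mulVec_diagonal]
  rw [hsqrt, conjDiagonalSqrt_mulVec_diagonal_sqrt hq, hW1']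

lemma sqrt_vecMul_conjDiagonalSqrt (hqW : q ᵥ* W = q) :
    (fun i => √(q i)) ᵥ* conjDiagonalSqrt q W = fun i => √(q i) := by
  have hq' : (fun i => √(q i)) ᵥ* diagonal (fun i => √(q i)) = q := funext fun i => by
    simp [vecMul_diagonal, Real.mul_self_sqrt (hq i).le]
  have hq'' : q ᵥ* diagonal (fun i => (√(q i))⁻¹) = fun i => √(q i) := funext fun i => by
    simp only [vecMul_diagonal]
    nth_rw 1 [← Real.mul_self_sqrt (hq i).le]
    rw [mul_inv_cancel_right₀ (Real.sqrt_pos.mpr (hq i)).ne']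
  rw [conjDiagonalSqrt, ← vecMul_vecMul, ← vecMul_vecMul, hq', hqW, hq'']

lemma conjDiagonalSqrt_mulVec_dotProduct_self_le (hW0 : ∀ i j, 0 ≤ W i j)
    (hW1 : ∀ i, ∑ j, W i j = 1) (hqW : q ᵥ* W = q) (u : ι → ℝ) :
    (conjDiagonalSqrt q W *ᵥ u) ⬝ᵥ (conjDiagonalSqrt q W *ᵥ u) ≤ u ⬝ᵥ u := by
  obtain ⟨z, rfl⟩ := exists_eq_diagonal_sqrt_mulVec hq u
  rw [conjDiagonalSqrt_mulVec_diagonal_sqrt hq, diagonal_sqrt_mulVec_dotProduct_self (hq · |>.le),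
    diagonal_sqrt_mulVec_dotProduct_self (hq · |>.le)]
  exact sum_mul_sq_mulVec_le hW0 hW1 (hq · |>.le) hqW z

lemma exists_eq_smul_sqrt_of_conjDiagonalSqrt_mulVec_dotProduct_self_eq (hW : W.IsIrreducible)
    (hWdiag : ∀ i, 0 < W i i) (hW1 : ∀ i, ∑ j, W i j = 1) (hqW : q ᵥ* W = q) (u : ι → ℝ)
    (hu : (conjDiagonalSqrt q W *ᵥ u) ⬝ᵥ (conjDiagonalSqrt q W *ᵥ u) = u ⬝ᵥ u) :
    ∃ c : ℝ, u = c • fun i => √(q i) := by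
  obtain ⟨z, rfl⟩ := exists_eq_diagonal_sqrt_mulVec hq u
  rw [conjDiagonalSqrt_mulVec_diagonal_sqrt hq, diagonal_sqrt_mulVec_dotProduct_self (hq · |>.le),
    diagonal_sqrt_mulVec_dotProduct_self (hq · |>.le)] at hu
  cases isEmpty_or_nonempty ι with
  | inl _ => exact ⟨0, Subsingleton.elim _ _⟩
  | inr hne =>
    obtain ⟨i₀⟩ := hne
    refine ⟨z i₀, funext fun i => ?_⟩
    rw [mulVec_diagonal, Pi.smul_apply, smul_eq_mul, mul_comm,
      eq_of_sum_mul_sq_mulVec_eq hW hWdiag hW1 hq hqW hu i₀ i]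

end ConjDiagonalSqrt

/-- Lemma 1: for a row stochastic, primitive-type matrix `W` with left
Perron–Frobenius eigenvector `q`, the second largest singular value
`σ̄ = σ_{N-1}(Q^{1/2} W Q^{-1/2})` satisfies `σ̄ < 1` and
`‖W(y - 1 qᵀ y)‖_Q ≤ σ̄ ‖y - 1 qᵀ y‖_Q` for all `y`. -/
theorem stmt0
    (N : ℕ) (hN : 1 < N)
    (W : Matrix (Fin N) (Fin N) ℝ)
    (hWnonneg : ∀ i j, 0 ≤ W i j)
    (hWdiag : ∀ i, 0 < W i i)
    (hWrow : ∀ i, ∑ j, W i j = 1)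
    (hWconn : ∀ i j, ∃ m : ℕ, 1 ≤ m ∧ 0 < (W ^ m) i j)
    (q : Fin N → ℝ)
    (hqpos : ∀ i, 0 < q i)
    (hqW : Matrix.vecMul q W = q)
    (hqsum : ∑ i, q i = 1)
    (Q : Matrix (Fin N) (Fin N) ℝ) (hQ : Q = Matrix.diagonal q)
    (σbar : ℝ)
    (hσbar : σbar = sortedSingVals
      (Matrix.diagonal (fun i => Real.sqrt (q i)) * W *
        Matrix.diagonal (fun i => (Real.sqrt (q i))⁻¹)) ⟨N - 2, by omega⟩) :
    σbar < 1 ∧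
      ∀ y : Fin N → ℝ,
        wnorm Q (W.mulVec (y - fun _ => ∑ j, q j * y j)) ≤
          σbar * wnorm Q (y - fun _ => ∑ j, q j * y j) := by
  have hW : W.IsIrreducible := (isIrreducible_iff_exists_pow_pos hWnonneg).mpr hWconn
  have hcontr := conjDiagonalSqrt_mulVec_dotProduct_self_le hqpos hWnonneg hWrow hqW
  have hrigid :=
    exists_eq_smul_sqrt_of_conjDiagonalSqrt_mulVec_dotProduct_self_eq hqpos hW hWdiag hWrow hqW
  have hq0 : ∀ i, 0 ≤ q i := fun i => (hqpos i).le
  subst hQ hσbar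
  refine ⟨sortedSingVals_penultimate_lt_one hN hcontr hrigid, fun y => ?_⟩
  have hv0 : (fun i => √(q i)) ≠ 0 := fun h =>
    (Real.sqrt_pos.mpr (hqpos ⟨0, by omega⟩)).ne' (congrFun h _)
  have hcentered : (fun i => √(q i)) ⬝ᵥ (diagonal (fun i => √(q i)) *ᵥ
      (y - fun _ => ∑ j, q j * y j)) = 0 := by
    simp [sqrt_dotProduct_diagonal_sqrt_mulVec hq0, mul_sub, Finset.sum_sub_distrib,
      ← Finset.sum_mul, hqsum]
  rw [wnorm_diagonal hq0, wnorm_diagonal hq0, ← conjDiagonalSqrt_mulVec_diagonal_sqrt hqpos]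
  exact sqrt_dotProduct_mulVec_le_sortedSingVals hN hcontr hrigid
    (conjDiagonalSqrt_mulVec_sqrt hqpos hWrow) (sqrt_vecMul_conjDiagonalSqrt hqpos hqW) hv0
    hcentered
end

section
/- Let W be an N×N real matrix and q ∈ ℝ^N a vector with positive entries satisfying qᵀW = qᵀ and 1ᵀq = 1; let Q = diag(q) and p ∈ ℝ^N the vector with entries p_i = √(q_i). Then the squared Q-induced operator norm of W − 1·qᵀ equals the largest eigenvalue of the symmetric matrix M − p·pᵀ, where M = Q^{−1/2} Wᵀ Q W Q^{−1/2}; that is, ‖W − 1qᵀ‖_Q² = λ_max(Q^{−1/2} Wᵀ Q W Q^{−1/2} − ppᵀ). -/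
/-!
With `S = diag(√q)` we have `Q = Sᵀ S`, so the substitution `y = S x` turns `‖·‖_Q` into the
Euclidean norm and `‖A‖_Q = ‖S A S⁻¹‖₂`, whose square is the largest eigenvalue of the Gram matrix
`(S A S⁻¹)ᵀ (S A S⁻¹)` by the Rayleigh quotient bound of the spectral theorem. Since `qᵀW = qᵀ` and
`1ᵀq = 1`, the matrix `A = W - 1qᵀ` satisfies `Aᵀ Q A = Wᵀ Q W - q qᵀ`, and conjugating by `S⁻¹`
turns `q qᵀ` into `p pᵀ`.
-/

open Matrix

/-- The `P`-induced operator norm `‖A‖_P = sup_{x ≠ 0} ‖Ax‖_P / ‖x‖_P`. -/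
noncomputable def opnorm {ι : Type*} [Fintype ι] (P A : Matrix ι ι ℝ) : ℝ :=
  sSup {r : ℝ | ∃ x : ι → ℝ, x ≠ 0 ∧ r = wnorm P (A.mulVec x) / wnorm P x}

/-- Largest eigenvalue of a (hermitian) real matrix. -/
noncomputable def eigMax {N : ℕ} (A : Matrix (Fin N) (Fin N) ℝ) : ℝ :=
  if hA : A.IsHermitian then ⨆ i, hA.eigenvalues i else 0

namespace Matrix

variable {n : Type*} [Fintype n] [DecidableEq n]

lemma dotProduct_mulVec_conj_diagonal (U : Matrix n n ℝ) (d x : n → ℝ) :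
    x ⬝ᵥ (U * diagonal d * Uᵀ) *ᵥ x = ∑ i, d i * (Uᵀ *ᵥ x) i ^ 2 := by
  rw [← mulVec_mulVec, ← mulVec_mulVec, dotProduct_mulVec, ← mulVec_transpose]
  simp only [dotProduct, mulVec_diagonal]
  exact Finset.sum_congr rfl fun i _ => by ring

namespace IsHermitian

variable {B : Matrix n n ℝ}

lemma transpose_eigenvectorUnitary (hB : B.IsHermitian) :
    (hB.eigenvectorUnitary : Matrix n n ℝ)ᵀ = star (hB.eigenvectorUnitary : Matrix n n ℝ) :=
  (conjTranspose_eq_transpose_of_trivial _).symm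

lemma eq_eigenvectorUnitary_mul_diagonal_mul_transpose (hB : B.IsHermitian) :
    B = (hB.eigenvectorUnitary : Matrix n n ℝ) * diagonal hB.eigenvalues *
      (hB.eigenvectorUnitary : Matrix n n ℝ)ᵀ := by
  conv_lhs => rw [hB.spectral_theorem, Unitary.conjStarAlgAut_apply]
  rw [hB.transpose_eigenvectorUnitary]
  rfl

lemma dotProduct_mulVec_eq_sum_eigenvalues (hB : B.IsHermitian) (x : n → ℝ) :
    x ⬝ᵥ B *ᵥ x = ∑ i, hB.eigenvalues i * ((hB.eigenvectorUnitary : Matrix n n ℝ)ᵀ *ᵥ x) i ^ 2 := by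
  conv_lhs => rw [hB.eq_eigenvectorUnitary_mul_diagonal_mul_transpose]
  exact dotProduct_mulVec_conj_diagonal _ _ x

lemma dotProduct_self_eq_sum_eigenvectorUnitary (hB : B.IsHermitian) (x : n → ℝ) :
    x ⬝ᵥ x = ∑ i, ((hB.eigenvectorUnitary : Matrix n n ℝ)ᵀ *ᵥ x) i ^ 2 := by
  have hU :
      (hB.eigenvectorUnitary : Matrix n n ℝ) * (hB.eigenvectorUnitary : Matrix n n ℝ)ᵀ = 1 := by
    rw [hB.transpose_eigenvectorUnitary, Unitary.mul_star_self_of_mem hB.eigenvectorUnitary.2]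
  simpa [hU] using dotProduct_mulVec_conj_diagonal (hB.eigenvectorUnitary : Matrix n n ℝ) 1 x

lemma dotProduct_mulVec_le_iSup_eigenvalues_mul (hB : B.IsHermitian) (x : n → ℝ) :
    x ⬝ᵥ B *ᵥ x ≤ (⨆ i, hB.eigenvalues i) * (x ⬝ᵥ x) := by
  rw [hB.dotProduct_mulVec_eq_sum_eigenvalues, hB.dotProduct_self_eq_sum_eigenvectorUnitary,
    Finset.mul_sum]
  gcongr with i
  exact le_ciSup (Finite.bddAbove_range _) i

lemma exists_dotProduct_mulVec_eq_iSup_eigenvalues_mul [Nonempty n] (hB : B.IsHermitian) :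
    ∃ v : n → ℝ, v ≠ 0 ∧ v ⬝ᵥ B *ᵥ v = (⨆ i, hB.eigenvalues i) * (v ⬝ᵥ v) := by
  obtain ⟨i, hi⟩ : ∃ i, hB.eigenvalues i = ⨆ j, hB.eigenvalues j := exists_eq_ciSup_of_finite
  refine ⟨hB.eigenvectorBasis i, fun h => hB.eigenvectorBasis.orthonormal.ne_zero i ?_, ?_⟩
  · ext j
    exact congrFun h j
  · rw [hB.mulVec_eigenvectorBasis i, dotProduct_smul, hi, smul_eq_mul]

end IsHermitian

end Matrix

section WeightedNorm

variable {ι : Type*} [Fintype ι]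

lemma wnorm_transpose_mul_mul (P S : Matrix ι ι ℝ) (x : ι → ℝ) :
    wnorm (Sᵀ * P * S) x = wnorm P (S *ᵥ x) := by
  rw [wnorm, wnorm, ← mulVec_mulVec, ← mulVec_mulVec, dotProduct_mulVec, vecMul_transpose]

lemma wnorm_one [DecidableEq ι] (x : ι → ℝ) : wnorm 1 x = √(x ⬝ᵥ x) := by
  rw [wnorm, one_mulVec]

lemma opnorm_transpose_mul_mul [DecidableEq ι] {P S R : Matrix ι ι ℝ} (hRS : R * S = 1)
    (hSR : S * R = 1) (A : Matrix ι ι ℝ) : opnorm (Sᵀ * P * S) A = opnorm P (S * A * R) := by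
  have hRS' : ∀ x, R *ᵥ (S *ᵥ x) = x := fun x => by rw [mulVec_mulVec, hRS, one_mulVec]
  have hSR' : ∀ y, S *ᵥ (R *ᵥ y) = y := fun y => by rw [mulVec_mulVec, hSR, one_mulVec]
  have hratio : ∀ x, wnorm (Sᵀ * P * S) (A *ᵥ x) / wnorm (Sᵀ * P * S) x =
      wnorm P ((S * A * R) *ᵥ (S *ᵥ x)) / wnorm P (S *ᵥ x) := fun x => by
    rw [wnorm_transpose_mul_mul, wnorm_transpose_mul_mul, ← mulVec_mulVec, ← mulVec_mulVec, hRS']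
  unfold opnorm
  congr 1
  ext r
  constructor
  · rintro ⟨x, hx, rfl⟩
    refine ⟨S *ᵥ x, fun h => hx ?_, hratio x⟩
    rw [← hRS' x, h, mulVec_zero]
  · rintro ⟨y, hy, rfl⟩
    refine ⟨R *ᵥ y, fun h => hy ?_, by rw [hratio, hSR']⟩
    rw [← hSR' y, h, mulVec_zero]

lemma opnorm_one_sq_eq_iSup_eigenvalues [DecidableEq ι] (C : Matrix ι ι ℝ)
    (hC : (Cᵀ * C).IsHermitian) :
    opnorm 1 C ^ 2 = ⨆ i, hC.eigenvalues i := by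
  have hquad : ∀ x, wnorm 1 (C *ᵥ x) = √(x ⬝ᵥ (Cᵀ * C) *ᵥ x) := fun x => by
    rw [← wnorm_transpose_mul_mul, Matrix.mul_one, wnorm]
  rcases isEmpty_or_nonempty ι with hι | hι
  · have hempty : {r : ℝ | ∃ x : ι → ℝ, x ≠ 0 ∧ r = wnorm 1 (C *ᵥ x) / wnorm 1 x} = ∅ :=
      Set.eq_empty_of_forall_notMem fun r ⟨x, hx, _⟩ => hx (Subsingleton.elim x 0)
    rw [opnorm, hempty, Real.sSup_empty, Real.iSup_of_isEmpty]
    norm_num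
  set lam := ⨆ i, hC.eigenvalues i
  obtain ⟨v, hv, hvlam⟩ := hC.exists_dotProduct_mulVec_eq_iSup_eigenvalues_mul
  have hpos : ∀ x : ι → ℝ, x ≠ 0 → 0 < x ⬝ᵥ x := fun x hx =>
    lt_of_le_of_ne (Finset.sum_nonneg fun i _ => mul_self_nonneg (x i))
      (Ne.symm (dotProduct_self_eq_zero.not.mpr hx))
  have hlam : 0 ≤ lam := by
    refine nonneg_of_mul_nonneg_left ?_ (hpos v hv)
    rw [← hvlam, ← mulVec_mulVec, dotProduct_mulVec, vecMul_transpose]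
    exact Finset.sum_nonneg fun i _ => mul_self_nonneg _
  have hgreatest : IsGreatest {r : ℝ | ∃ x : ι → ℝ, x ≠ 0 ∧ r = wnorm 1 (C *ᵥ x) / wnorm 1 x}
      √lam := by
    refine ⟨⟨v, hv, ?_⟩, ?_⟩
    · rw [hquad, wnorm_one, hvlam, Real.sqrt_mul hlam, mul_div_cancel_right₀]
      exact (Real.sqrt_pos.mpr (hpos v hv)).ne'
    · rintro r ⟨x, hx, rfl⟩
      rw [hquad, wnorm_one, div_le_iff₀ (Real.sqrt_pos.mpr (hpos x hx)), ← Real.sqrt_mul hlam]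
      exact Real.sqrt_le_sqrt (hC.dotProduct_mulVec_le_iSup_eigenvalues_mul x)
  rw [opnorm, hgreatest.csSup_eq, Real.sq_sqrt hlam]

end WeightedNorm

lemma opnorm_one_sq_eq_eigMax_transpose_mul_self {N : ℕ} (C : Matrix (Fin N) (Fin N) ℝ) :
    opnorm 1 C ^ 2 = eigMax (Cᵀ * C) := by
  have hC : (Cᵀ * C).IsHermitian := isHermitian_iff_isSymm.mpr (isSymm_transpose_mul_self C)
  rw [eigMax, dif_pos hC]
  exact opnorm_one_sq_eq_iSup_eigenvalues C hC

lemma transpose_mul_diagonal_mul_sub_one_vecMulVec {ι : Type*} [Fintype ι] [DecidableEq ι]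
    {W : Matrix ι ι ℝ} {q : ι → ℝ} (hqW : q ᵥ* W = q) (hqsum : ∑ i, q i = 1) :
    (W - vecMulVec (fun _ => 1) q)ᵀ * diagonal q * (W - vecMulVec (fun _ => 1) q) =
      Wᵀ * diagonal q * W - vecMulVec q q := by
  have hWq : Wᵀ *ᵥ q = q := by rw [mulVec_transpose, hqW]
  have hqone : q ⬝ᵥ (fun _ => (1 : ℝ)) = 1 := by simp [dotProduct, hqsum]
  have hDone : diagonal q *ᵥ (fun _ => (1 : ℝ)) = q := by ext; simp [mulVec_diagonal]
  have honeD : (fun _ => (1 : ℝ)) ᵥ* diagonal q = q := by ext; simp [vecMul_diagonal]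
  rw [transpose_sub, transpose_vecMulVec, Matrix.sub_mul, Matrix.sub_mul, Matrix.mul_sub,
    Matrix.mul_sub, mul_vecMulVec, vecMulVec_mul, vecMulVec_mul, vecMulVec_mul, ← mulVec_mulVec,
    hDone, hWq, honeD, hqW, vecMul_vecMulVec, hqone, one_smul]
  abel

section Diagonal

variable {ι : Type*} [Fintype ι] [DecidableEq ι]

lemma diagonal_inv_mul_diagonal {d : ι → ℝ} (hd : ∀ i, d i ≠ 0) :
    diagonal (fun i => (d i)⁻¹) * diagonal d = 1 := by
  rw [diagonal_mul_diagonal, ← diagonal_one]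
  exact congrArg diagonal (funext fun i => inv_mul_cancel₀ (hd i))

lemma diagonal_mul_diagonal_inv {d : ι → ℝ} (hd : ∀ i, d i ≠ 0) :
    diagonal d * diagonal (fun i => (d i)⁻¹) = 1 := by
  rw [diagonal_mul_diagonal, ← diagonal_one]
  exact congrArg diagonal (funext fun i => mul_inv_cancel₀ (hd i))

lemma transpose_diagonal_sqrt_mul_diagonal_sqrt {q : ι → ℝ} (hq : ∀ i, 0 ≤ q i) :
    (diagonal fun i => √(q i))ᵀ * diagonal (fun i => √(q i)) = diagonal q := by
  rw [diagonal_transpose, diagonal_mul_diagonal]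
  exact congrArg diagonal (funext fun i => Real.mul_self_sqrt (hq i))

lemma diagonal_inv_sqrt_mulVec (q : ι → ℝ) :
    diagonal (fun i => (√(q i))⁻¹) *ᵥ q = fun i => √(q i) := by
  ext i
  rw [mulVec_diagonal, inv_mul_eq_div, Real.div_sqrt]

end Diagonal

/-- `‖W - 1qᵀ‖_Q² = λ_max(Q^{-1/2} Wᵀ Q W Q^{-1/2} - ppᵀ)`, where
`p_i = √(q_i)`. -/
theorem stmt1
    (N : ℕ)
    (W : Matrix (Fin N) (Fin N) ℝ)
    (q : Fin N → ℝ)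
    (hqpos : ∀ i, 0 < q i)
    (hqW : Matrix.vecMul q W = q)
    (hqsum : ∑ i, q i = 1)
    (Q : Matrix (Fin N) (Fin N) ℝ) (hQ : Q = Matrix.diagonal q)
    (p : Fin N → ℝ) (hp : p = fun i => Real.sqrt (q i)) :
    (opnorm Q (W - Matrix.vecMulVec (fun _ => (1 : ℝ)) q)) ^ 2 =
      eigMax
        (Matrix.diagonal (fun i => (Real.sqrt (q i))⁻¹) * Wᵀ * Q * W *
            Matrix.diagonal (fun i => (Real.sqrt (q i))⁻¹) -
          Matrix.vecMulVec p p) := by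
  subst hQ hp
  set S : Matrix (Fin N) (Fin N) ℝ := diagonal fun i => √(q i)
  set R : Matrix (Fin N) (Fin N) ℝ := diagonal fun i => (√(q i))⁻¹
  set A := W - vecMulVec (fun _ => (1 : ℝ)) q
  have hsqrt : ∀ i, √(q i) ≠ 0 := fun i => (Real.sqrt_pos.mpr (hqpos i)).ne'
  have hSS : Sᵀ * S = diagonal q :=
    transpose_diagonal_sqrt_mul_diagonal_sqrt fun i => (hqpos i).le
  have hnorm : opnorm (diagonal q) A = opnorm 1 (S * A * R) := by
    rw [← hSS, ← Matrix.mul_one Sᵀ, opnorm_transpose_mul_mul (diagonal_inv_mul_diagonal hsqrt)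
      (diagonal_mul_diagonal_inv hsqrt)]
  have hgram : (S * A * R)ᵀ * (S * A * R) =
      R * Wᵀ * diagonal q * W * R - vecMulVec (fun i => √(q i)) (fun i => √(q i)) :=
    calc (S * A * R)ᵀ * (S * A * R) = Rᵀ * (Aᵀ * (Sᵀ * S) * A) * R := by
          simp only [transpose_mul, Matrix.mul_assoc]
      _ = R * (Wᵀ * diagonal q * W - vecMulVec q q) * R := by
        rw [hSS, transpose_mul_diagonal_mul_sub_one_vecMulVec hqW hqsum, diagonal_transpose]
      _ = _ := by
        rw [Matrix.mul_sub, Matrix.sub_mul, mul_vecMulVec, vecMulVec_mul, ← mulVec_transpose,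
          diagonal_transpose, diagonal_inv_sqrt_mulVec]
        simp only [Matrix.mul_assoc]
  rw [hnorm, ← hgram]
  exact opnorm_one_sq_eq_eigMax_transpose_mul_self _
end
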